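/- arXiv:2303.18000 — 3 statements merged into one kernel-verified Lean document; each statement's English description precedes it below -/
import Mathlib

section
/- A_c maps V♯ ∩ U_c into V♯: for every φ ∈ V♯ ∩ U_c one has A_c φ ∈ V♯. -/
open Real Filter Set Function MeasureTheory
open scoped ENNReal

noncomputable section

namespace HopfStmt

/-- The sup part of the periodic Hölder norm. -/
def supN {E : Type*} [NormedAddCommGroup E] (u : ℝ → E) : ℝ := ⨆ t : ℝ, ‖u t‖

/-- The Hölder seminorm part. -/
def holS {E : Type*} [NormedAddCommGroup E] (β : ℝ) (u : ℝ → E) : ℝ :=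
  ⨆ p : ℝ × ℝ, ‖u p.1 - u p.2‖ / |p.1 - p.2| ^ β

/-- The norm of `C^β_{2π}(ℝ, E)`. -/
def holderN {E : Type*} [NormedAddCommGroup E] (β : ℝ) (u : ℝ → E) : ℝ :=
  supN u + holS β u

/-- Membership in `C^β_{2π}(ℝ, E)`: `2π`-periodic and `β`-Hölder continuous. -/
def MemHolder {E : Type*} [NormedAddCommGroup E] (β : ℝ) (u : ℝ → E) : Prop :=
  Function.Periodic u (2 * π) ∧ ∃ C : ℝ, ∀ s t : ℝ, ‖u s - u t‖ ≤ C * |s - t| ^ β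

/-- Membership in the span of the first cosine and sine modes: `w = a ⊗ c₁ + b ⊗ s₁`. -/
def memSp1 {E : Type*} [AddCommGroup E] [Module ℝ E] (w : ℝ → E) : Prop :=
  ∃ a b : E, ∀ t : ℝ, w t = Real.cos t • a + Real.sin t • b

/-- `L₁ ψ := Re (ψ ⊗ e₁)`, i.e. `(L₁ψ)(t) = cos t • ψ₁ - sin t • ψ₂` for `ψ = ψ₁ + iψ₂`. -/
def L1 {E : Type*} [AddCommGroup E] [Module ℝ E] (ψ : E × E) : ℝ → E :=
  fun t => Real.cos t • ψ.1 - Real.sin t • ψ.2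

/-- Multiplication by the complex scalar `c` on the complexification `E_c = E × E`. -/
def csmul {E : Type*} [AddCommGroup E] [Module ℝ E] (c : ℂ) (x : E × E) : E × E :=
  (c.re • x.1 - c.im • x.2, c.im • x.1 + c.re • x.2)

/-- Complex conjugation on the complexification. -/
def conjC {E : Type*} [AddCommGroup E] (x : E × E) : E × E := (x.1, -x.2)

variable {V : Type*} [NormedAddCommGroup V] [NormedSpace ℝ V]
variable {U : Type*} [NormedAddCommGroup U] [NormedSpace ℝ U]

/-- The complexified inclusion `ι_c : U_c → V_c`. -/
def iotaC (ι : U →L[ℝ] V) (ψ : U × U) : V × V := (ι ψ.1, ι ψ.2)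

/-- The complexified operator `A_c : U_c → V_c`. -/
def AcC (A : U →L[ℝ] V) (ψ : U × U) : V × V := (A ψ.1, A ψ.2)

/-- The operator `c - A_c : U_c → V_c` for a complex scalar `c`. -/
def cMinusA (ι A : U →L[ℝ] V) (c : ℂ) (ψ : U × U) : V × V :=
  csmul c (iotaC ι ψ) - AcC A ψ

/-- The kernel `𝒩(i - A_c) ⊆ U_c`. -/
def kerIA (ι A : U →L[ℝ] V) : Set (U × U) := {ψ | cMinusA ι A Complex.I ψ = 0}

/-- The range `ℛ(i - A_c) ⊆ V_c`. -/
def ranIA (ι A : U →L[ℝ] V) : Set (V × V) := Set.range (cMinusA ι A Complex.I)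

/-- `V♯ := ℛ(i - A_c) ∩ ℛ(-i - A_c)`. -/
def Vsharp (ι A : U →L[ℝ] V) : Set (V × V) :=
  Set.range (cMinusA ι A Complex.I) ∩ Set.range (cMinusA ι A (-Complex.I))

/-- The `V`-valued time derivative of `w : ℝ → U` (through the inclusion `ι`). -/
def Xder (ι : U →L[ℝ] V) (w : ℝ → U) : ℝ → V := fun t => deriv (fun s => ι (w s)) t

/-- Membership in `X := C^{1+β}_{2π}(ℝ,V) ∩ C^β_{2π}(ℝ,U)`. -/
def MemX (β : ℝ) (ι : U →L[ℝ] V) (w : ℝ → U) : Prop :=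
  MemHolder β w ∧ (∀ t : ℝ, DifferentiableAt ℝ (fun s => ι (w s)) t) ∧
    MemHolder β (Xder ι w)

/-- The norm of `X`: `‖w‖_X = ‖w‖_{V,1+β} + ‖w‖_{U,β}`. -/
def normX (β : ℝ) (ι : U →L[ℝ] V) (w : ℝ → U) : ℝ :=
  (holderN β (fun t => ι (w t)) + holderN β (Xder ι w)) + holderN β w

/-- `T₁ w := ẇ - A w`. -/
def T1op (ι A : U →L[ℝ] V) (w : ℝ → U) : ℝ → V := fun t => Xder ι w t - A (w t)

/-- Hypothesis (H2): `±i` are simple eigenvalues of `A`, i.e.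
`dim 𝒩(i - A_c) = 1 = codim ℛ(i - A_c)` and nonzero kernel elements do not lie in the range. -/
def H2hyp (ι A : U →L[ℝ] V) : Prop :=
  (∃ ψ ∈ kerIA ι A, ψ ≠ 0 ∧ ∀ φ ∈ kerIA ι A, ∃ c : ℂ, φ = csmul c ψ) ∧
  (∃ χ : V × V, χ ∉ ranIA ι A ∧ ∀ v : V × V, ∃ c : ℂ, ∃ r ∈ ranIA ι A, v = r + csmul c χ) ∧
  (∀ ψ ∈ kerIA ι A, ψ ≠ 0 → iotaC ι ψ ∉ ranIA ι A)

/-- Hypothesis (H4): `ik ∈ ρ(A_c)` for `k ∈ ℤ \ {-1, 1}`. -/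
def H4hyp (ι A : U →L[ℝ] V) : Prop :=
  ∀ k : ℤ, k ≠ 1 → k ≠ -1 → Function.Bijective (cMinusA ι A (Complex.I * (k : ℂ)))

/-- Hypothesis (H5): `‖(in - A_c)⁻¹‖ ≤ M / n` for `n = 2, 3, 4, ...`. -/
def H5hyp (ι A : U →L[ℝ] V) : Prop :=
  ∃ M : ℝ, 0 < M ∧ ∀ n : ℕ, 2 ≤ n →
    ∀ ψ : U × U, (n : ℝ) * ‖iotaC ι ψ‖ ≤ M * ‖cMinusA ι A (Complex.I * (n : ℂ)) ψ‖

/-- Hypothesis (H3): the eigenvalue branch `μ(λ)` of `A_c + (h_u(λ,0))_c` through `μ(0) = i`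
satisfies the transversality condition `Re μ'(0) ≠ 0`. -/
def H3hyp (ι A : U →L[ℝ] V) (h : ℝ → U → V) : Prop :=
  ∃ (ε : ℝ) (μ : ℝ → ℂ) (ψb : ℝ → U × U) (μ' : ℂ), 0 < ε ∧
    μ 0 = Complex.I ∧ ψb 0 ∈ kerIA ι A ∧ ψb 0 ≠ 0 ∧
    ContinuousOn ψb (Metric.ball (0 : ℝ) ε) ∧
    (∀ lam ∈ Metric.ball (0 : ℝ) ε,
      AcC A (ψb lam) + (fderiv ℝ (h lam) 0 (ψb lam).1, fderiv ℝ (h lam) 0 (ψb lam).2)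
        = csmul (μ lam) (iotaC ι (ψb lam))) ∧
    HasDerivAt μ μ' 0 ∧ μ'.re ≠ 0

/-- Unbundled notion: `f : (E, NE) → (F, NF)` is of class `C²` on `D` (Fréchet sense). -/
def UFC2On {E F : Type*} [AddCommGroup E] [Module ℝ E] [AddCommGroup F] [Module ℝ F]
    (NE : E → ℝ) (NF : F → ℝ) (D : Set E) (f : E → F) : Prop :=
  ∃ (D1 : E → E → F) (D2 : E → E → E → F),
    (∀ x ∈ D, IsLinearMap ℝ (D1 x) ∧ ∃ C : ℝ, ∀ e, NF (D1 x e) ≤ C * NE e) ∧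
    (∀ x ∈ D, ∀ ε > (0 : ℝ), ∃ d > (0 : ℝ), ∀ y ∈ D, NE (y - x) < d →
      NF (f y - f x - D1 x (y - x)) ≤ ε * NE (y - x)) ∧
    (∀ x ∈ D, (∀ e, IsLinearMap ℝ (D2 x e)) ∧ (∀ e', IsLinearMap ℝ (fun e => D2 x e e')) ∧
      ∃ C : ℝ, ∀ e e', NF (D2 x e e') ≤ C * NE e * NE e') ∧
    (∀ x ∈ D, ∀ ε > (0 : ℝ), ∃ d > (0 : ℝ), ∀ y ∈ D, NE (y - x) < d →
      ∀ e, NF (D1 y e - D1 x e - D2 x (y - x) e) ≤ ε * NE (y - x) * NE e) ∧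
    (∀ x ∈ D, ∀ ε > (0 : ℝ), ∃ d > (0 : ℝ), ∀ y ∈ D, NE (y - x) < d →
      ∀ e e', NF (D2 y e e' - D2 x e e') ≤ ε * NE e * NE e')

/-- Unbundled notion: `f : ℝ → (E, NE)` is `C¹` on `s` with derivative `f'`. -/
def UC1On {E : Type*} [AddCommGroup E] [Module ℝ E] (NE : E → ℝ) (s : Set ℝ)
    (f f' : ℝ → E) : Prop :=
  (∀ a ∈ s, ∀ ε > (0 : ℝ), ∃ d > (0 : ℝ), ∀ b ∈ s, |b - a| < d →
    NE (f b - f a - (b - a) • f' a) ≤ ε * |b - a|) ∧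
  (∀ a ∈ s, ∀ ε > (0 : ℝ), ∃ d > (0 : ℝ), ∀ b ∈ s, |b - a| < d → NE (f' b - f' a) ≤ ε)


/-! Since `A_c` commutes with multiplication by `c`, so does `c - A_c`. Hence if
`ι_c φ = (c - A_c) ψ`, then `A_c φ = c ι_c φ - (c - A_c) φ = (c - A_c) (c ψ - φ)`. -/

section RangeOfCMinusA

variable (ι A : U →L[ℝ] V) (c : ℂ)

lemma cMinusA_sub (χ χ' : U × U) :
    cMinusA ι A c (χ - χ') = cMinusA ι A c χ - cMinusA ι A c χ' := by
  simp only [cMinusA, csmul, iotaC, AcC, Prod.fst_sub, Prod.snd_sub, Prod.mk_sub_mk,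
    Prod.mk.injEq, map_sub, smul_sub]
  constructor <;> abel

lemma cMinusA_csmul (χ : U × U) :
    cMinusA ι A c (csmul c χ) = csmul c (cMinusA ι A c χ) := by
  simp only [cMinusA, csmul, iotaC, AcC, Prod.mk_sub_mk, Prod.mk.injEq,
    map_sub, map_add, map_smul]
  constructor <;> module

lemma AcC_mem_range_cMinusA {φ : U × U} (hφ : iotaC ι φ ∈ range (cMinusA ι A c)) :
    AcC A φ ∈ range (cMinusA ι A c) := by
  obtain ⟨ψ, hψ⟩ := hφ
  refine ⟨csmul c ψ - φ, ?_⟩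
  rw [cMinusA_sub, cMinusA_csmul, hψ, cMinusA]
  abel

end RangeOfCMinusA

theorem Ac_maps_Vsharp_inter_Uc_into_Vsharp_general
    {V : Type*} [NormedAddCommGroup V] [NormedSpace ℝ V]
    {U : Type*} [NormedAddCommGroup U] [NormedSpace ℝ U]
    (ι A : U →L[ℝ] V) :
    ∀ φ : U × U, iotaC ι φ ∈ Vsharp ι A → AcC A φ ∈ Vsharp ι A :=
  fun _ hφ => ⟨AcC_mem_range_cMinusA ι A _ hφ.1, AcC_mem_range_cMinusA ι A _ hφ.2⟩

/-- **Lemma 3.1.** `A_c {V♯ ∩ U_c} ⊆ V♯`, where `V♯ = ℛ(i - A_c) ∩ ℛ(-i - A_c)`. -/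
theorem Ac_maps_Vsharp_inter_Uc_into_Vsharp
    {V : Type*} [NormedAddCommGroup V] [NormedSpace ℝ V] [CompleteSpace V]
    {U : Type*} [NormedAddCommGroup U] [NormedSpace ℝ U] [CompleteSpace U]
    (ι A : U →L[ℝ] V) (hι : Function.Injective ι)
    (hUnorm : ∀ u : U, ‖u‖ = ‖A u‖) (hAbij : Function.Bijective A) :
    ∀ φ : U × U, iotaC ι φ ∈ Vsharp ι A → AcC A φ ∈ Vsharp ι A :=
  Ac_maps_Vsharp_inter_Uc_into_Vsharp_general ι A

end HopfStmt
end
end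

section
/- Assume (H2): ±i are simple eigenvalues of A, i.e. dim 𝒩(i−A_c) = 1 = codim ℛ(i−A_c) and every nonzero ψ ∈ 𝒩(i−A_c) satisfies ψ ∉ ℛ(i−A_c); and assume (H4): ik belongs to the resolvent set ρ(A_c) for every k ∈ ℤ ∖ {−1,1}. Then iℤ ⊆ ρ(A♯), i.e. for every n ∈ ℤ the operator in − A♯ is a bijection from V♯ ∩ 𝒟(A_c) onto V♯ with bounded inverse. -/
open Real Filter Set Function MeasureTheory
open scoped ENNReal

noncomputable section

namespace HopfStmt

variable {V : Type*} [NormedAddCommGroup V] [NormedSpace ℝ V]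
variable {U : Type*} [NormedAddCommGroup U] [NormedSpace ℝ U]

/-!
Put `T := ι ∘ A⁻¹ ∈ ℒ(V)` and `B c := c T_c - 1` on `V_c`. Then `(c - A_c) ψ = B c (A_c ψ)` and
`ι_c ψ = T_c (A_c ψ)`, so the claim is about the commuting bounded operators `B c` on
`V♯ = ℛ(B i) ∩ ℛ(B (-i))`. Since `B (in)` commutes with `B (±i)`, it maps `V♯` into itself, and for
`n ≠ ±1` so does its inverse given by (H4). For `n = 1`, (H2) says `V_c = ℛ(B i) ⊕ 𝒩(B i)` with
`𝒩(B i)` finite-dimensional, and complex conjugation gives the same splitting at `-i`. As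
`B i + B (-i) = -2`, `B i` acts as `-2` on `𝒩(B (-i))`, and this makes `B i` a bijection of `V♯`;
`n = -1` follows by symmetry. Finally, a range complemented by a finite-dimensional kernel is
closed, so `V♯` is a Banach space and the open mapping theorem bounds the inverse on it.
-/

section Banach

variable {𝕜 E F : Type*} [NontriviallyNormedField 𝕜]
  [NormedAddCommGroup E] [NormedSpace 𝕜 E] [CompleteSpace E]
  [NormedAddCommGroup F] [NormedSpace 𝕜 F] [CompleteSpace F]

theorem isClosed_range_of_isCompl_of_finiteDimensional_ker [IsRCLikeNormedField 𝕜]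
    (B : E →L[𝕜] F) [FiniteDimensional 𝕜 B.ker] {G : Submodule 𝕜 F} (hG : IsClosed (G : Set F))
    (h : IsCompl B.range G) : IsClosed (B.range : Set F) := by
  obtain ⟨W, hW, hWker⟩ :=
    (Submodule.ClosedComplemented.of_finiteDimensional B.ker).exists_isClosed_isCompl
  have : CompleteSpace W := hW.completeSpace_coe
  have hrange : (B ∘L W.subtypeL).range = B.range := by
    rw [ContinuousLinearMap.toLinearMap_comp, LinearMap.range_comp,
      Submodule.toLinearMap_subtypeL, Submodule.range_subtype]
    exact Submodule.map_eq_range_iff.2 hWker.symm.codisjoint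
  have hker : (B ∘L W.subtypeL).ker = ⊥ := by
    rw [ContinuousLinearMap.toLinearMap_comp, LinearMap.ker_comp,
      Submodule.toLinearMap_subtypeL, ← Submodule.disjoint_iff_comap_eq_bot]
    exact hWker.symm.disjoint
  rw [← hrange] at h ⊢
  exact (B ∘L W.subtypeL).closed_complemented_range_of_isCompl_of_ker_eq_bot G h hG hker

theorem exists_norm_le_mul_norm_of_injOn (L : E →L[𝕜] F) {S : Submodule 𝕜 E}
    (hS : IsClosed (S : Set E)) (hinj : Set.InjOn L S) (hLS : IsClosed (L '' S)) :
    ∃ C : ℝ, ∀ x ∈ S, ‖x‖ ≤ C * ‖L x‖ := by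
  have : CompleteSpace S := hS.completeSpace_coe
  have hf : Function.Injective (L ∘L S.subtypeL) := fun x y hxy => Subtype.ext (hinj x.2 y.2 hxy)
  have hrange : Set.range (L ∘L S.subtypeL) = L '' S := by
    rw [ContinuousLinearMap.coe_comp, Set.range_comp, Submodule.coe_subtypeL,
      Submodule.coe_subtype, Subtype.range_coe]
  obtain ⟨K, hK⟩ := (L ∘L S.subtypeL).antilipschitz_of_injective_of_isClosed_range hf
    (hrange ▸ hLS)
  exact ⟨K, fun x hx => hK.le_mul_norm (map_zero _) (⟨x, hx⟩ : S)⟩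

end Banach

theorem mem_range_of_commute_of_bijective {α : Type*} {f g : α → α} (h : Function.Commute f g)
    (hf : Function.Bijective f) {x : α} (hx : f x ∈ Set.range g) : x ∈ Set.range g := by
  obtain ⟨y, hy⟩ := hx
  obtain ⟨z, rfl⟩ := hf.2 y
  exact ⟨z, hf.1 (by rw [h.eq, hy])⟩

theorem conjC_conjC {W : Type*} [AddCommGroup W] (x : W × W) : conjC (conjC x) = x := by
  simp [conjC]

section Csmul

variable {W : Type*} [AddCommGroup W] [Module ℝ W]

theorem csmul_csmul (a b : ℂ) (x : W × W) : csmul a (csmul b x) = csmul (a * b) x := by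
  simp only [csmul, Prod.ext_iff, Complex.mul_re, Complex.mul_im]
  constructor <;> module

@[simp] theorem one_csmul (x : W × W) : csmul 1 x = x := by simp [csmul]

@[simp] theorem zero_csmul (x : W × W) : csmul 0 x = 0 := by simp [csmul]

@[simp] theorem csmul_zero (c : ℂ) : csmul c (0 : W × W) = 0 := by simp [csmul]

theorem csmul_add (c : ℂ) (x y : W × W) : csmul c (x + y) = csmul c x + csmul c y := by
  simp only [csmul, Prod.ext_iff, Prod.fst_add, Prod.snd_add]
  constructor <;> module

theorem csmul_eq_smul_add_smul (c : ℂ) (x : W × W) :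
    csmul c x = c.re • x + c.im • csmul Complex.I x := by
  simp only [csmul, Prod.ext_iff, Complex.I_re, Complex.I_im, Prod.smul_fst, Prod.smul_snd,
    Prod.fst_add, Prod.snd_add]
  constructor <;> module

end Csmul

section Complexified

variable {E : Type*} [NormedAddCommGroup E] [NormedSpace ℝ E] (T : E →L[ℝ] E)

def csmulL (c : ℂ) : (E × E) →L[ℝ] (E × E) :=
  (c.re • ContinuousLinearMap.fst ℝ E E - c.im • ContinuousLinearMap.snd ℝ E E).prod
    (c.im • ContinuousLinearMap.fst ℝ E E + c.re • ContinuousLinearMap.snd ℝ E E)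

def conjL : (E × E) ≃L[ℝ] (E × E) :=
  (ContinuousLinearEquiv.refl ℝ E).prodCongr (ContinuousLinearEquiv.neg ℝ)

def cTMinusOne (c : ℂ) : (E × E) →L[ℝ] (E × E) :=
  csmulL c ∘L T.prodMap T - 1

theorem cTMinusOne_apply (c : ℂ) (x : E × E) :
    cTMinusOne T c x = csmul c (T x.1, T x.2) - x := rfl

theorem commute_cTMinusOne (c d : ℂ) :
    Function.Commute (cTMinusOne T c) (cTMinusOne T d) := fun x => by
  simp only [cTMinusOne_apply, csmul, Prod.ext_iff, Prod.fst_sub, Prod.snd_sub, map_sub,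
    map_add, map_smul]
  constructor <;> module

theorem commute_cTMinusOne_csmul (c d : ℂ) :
    Function.Commute (cTMinusOne T c) (csmul d) := fun x => by
  simp only [cTMinusOne_apply, csmul, Prod.ext_iff, Prod.fst_sub, Prod.snd_sub, map_sub,
    map_add, map_smul]
  constructor <;> module

theorem commute_cTMinusOne_prodMap (c : ℂ) :
    Function.Commute (cTMinusOne T c) (T.prodMap T) := fun x => by
  simp [cTMinusOne_apply, csmul, Prod.ext_iff]

theorem cTMinusOne_neg_apply (c : ℂ) (x : E × E) :
    cTMinusOne T (-c) x = (-2 : ℝ) • x - cTMinusOne T c x := by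
  simp only [cTMinusOne_apply, csmul, Prod.ext_iff, Complex.neg_re, Complex.neg_im,
    Prod.fst_sub, Prod.snd_sub, Prod.smul_fst, Prod.smul_snd]
  constructor <;> module

theorem cTMinusOne_conjC (c : ℂ) (x : E × E) :
    cTMinusOne T c (conjC x) = conjC (cTMinusOne T (starRingEnd ℂ c) x) := by
  simp only [cTMinusOne_apply, csmul, conjC, Prod.ext_iff, Complex.conj_re, Complex.conj_im,
    map_neg, Prod.fst_sub, Prod.snd_sub]
  constructor <;> module

theorem csmul_mem_range_cTMinusOne {c : ℂ} (d : ℂ) {x : E × E}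
    (hx : x ∈ (cTMinusOne T c).range) : csmul d x ∈ (cTMinusOne T c).range :=
  (commute_cTMinusOne_csmul T c d).mapsTo_range hx

theorem csmul_mem_ker_cTMinusOne {c : ℂ} (d : ℂ) {x : E × E}
    (hx : x ∈ (cTMinusOne T c).ker) : csmul d x ∈ (cTMinusOne T c).ker := by
  have h : cTMinusOne T c x = 0 := hx
  show cTMinusOne T c (csmul d x) = 0
  rw [commute_cTMinusOne_csmul T c d x, h, csmul_zero]

theorem prodMap_mem_range_cTMinusOne_iff {c : ℂ} {x : E × E} :
    T.prodMap T x ∈ (cTMinusOne T c).range ↔ x ∈ (cTMinusOne T c).range := by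
  refine ⟨fun h => ?_, fun h => (commute_cTMinusOne_prodMap T c).mapsTo_range h⟩
  have hx : x = csmul c (T.prodMap T x) - cTMinusOne T c x := (sub_sub_cancel _ x).symm
  rw [hx]
  exact sub_mem (csmul_mem_range_cTMinusOne T c h) ⟨x, rfl⟩

end Complexified

section Sharp

variable {E : Type*} [NormedAddCommGroup E] [NormedSpace ℝ E] (T : E →L[ℝ] E)

def sharp (c : ℂ) : Submodule ℝ (E × E) :=
  (cTMinusOne T c).range ⊓ (cTMinusOne T (-c)).range

theorem sharp_neg (c : ℂ) : sharp T (-c) = sharp T c := by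
  rw [sharp, sharp, neg_neg, inf_comm]

theorem prodMap_mem_sharp_iff {c : ℂ} {x : E × E} :
    T.prodMap T x ∈ sharp T c ↔ x ∈ sharp T c := by
  simp only [sharp, Submodule.mem_inf, prodMap_mem_range_cTMinusOne_iff]

theorem mapsTo_sharp (c d : ℂ) : Set.MapsTo (cTMinusOne T d) (sharp T c) (sharp T c) :=
  fun _ ⟨hx, hx'⟩ =>
    ⟨(commute_cTMinusOne T c d).mapsTo_range hx, (commute_cTMinusOne T (-c) d).mapsTo_range hx'⟩

theorem bijOn_sharp_of_bijective {c d : ℂ} (hd : Function.Bijective (cTMinusOne T d)) :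
    Set.BijOn (cTMinusOne T d) (sharp T c) (sharp T c) := by
  refine ⟨mapsTo_sharp T c d, hd.1.injOn, fun v ⟨hv, hv'⟩ => ?_⟩
  obtain ⟨x, rfl⟩ := hd.2 v
  exact ⟨x, ⟨mem_range_of_commute_of_bijective (commute_cTMinusOne T d c) hd hv,
    mem_range_of_commute_of_bijective (commute_cTMinusOne T d (-c)) hd hv'⟩, rfl⟩

theorem bijOn_sharp_of_isCompl {c : ℂ}
    (hc : IsCompl (cTMinusOne T c).range (cTMinusOne T c).ker)
    (hc' : IsCompl (cTMinusOne T (-c)).range (cTMinusOne T (-c)).ker) :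
    Set.BijOn (cTMinusOne T c) (sharp T c) (sharp T c) := by
  refine ⟨mapsTo_sharp T c c, fun x hx y hy hxy => ?_, fun v hv => ?_⟩
  · refine sub_eq_zero.1 (Submodule.disjoint_def.1 hc.disjoint _ (sub_mem hx.1 hy.1) ?_)
    rw [LinearMap.mem_ker, map_sub, ContinuousLinearMap.coe_coe, hxy, sub_self]
  obtain ⟨w, rfl⟩ := hv.1
  obtain ⟨r, k, hr, hk, rfl⟩ := Submodule.codisjoint_iff_exists_add_eq.1 hc.codisjoint w
  obtain ⟨s, k', hs, hk', rfl⟩ := Submodule.codisjoint_iff_exists_add_eq.1 hc'.codisjoint r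
  have hBk : cTMinusOne T c k = 0 := hk
  have hBk' : cTMinusOne T c k' = (-2 : ℝ) • k' := by
    have h := cTMinusOne_neg_apply T c k'
    rw [show cTMinusOne T (-c) k' = 0 from hk', eq_sub_iff_add_eq, zero_add] at h
    exact h
  have hk'c : k' ∈ (cTMinusOne T c).range :=
    ⟨(-1 / 2 : ℝ) • k', by rw [ContinuousLinearMap.coe_coe, map_smul, hBk', smul_smul]; norm_num⟩
  have hs_sharp : s ∈ sharp T c := ⟨by simpa using sub_mem hr hk'c, hs⟩
  have h2k' : (2 : ℝ) • k' ∈ (cTMinusOne T (-c)).range := by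
    convert sub_mem (mapsTo_sharp T c c hs_sharp).2 hv.2 using 1
    rw [map_add, map_add, ContinuousLinearMap.coe_coe, hBk', hBk]
    module
  obtain rfl : k' = 0 := Submodule.disjoint_def.1 hc'.disjoint k'
    (by simpa [smul_smul] using Submodule.smul_mem _ (1 / 2 : ℝ) h2k') hk'
  exact ⟨s, hs_sharp, by rw [add_zero, map_add, ContinuousLinearMap.coe_coe, hBk, add_zero]⟩

theorem mem_range_cTMinusOne_conj {c : ℂ} {x : E × E} :
    x ∈ (cTMinusOne T (starRingEnd ℂ c)).range ↔ conjC x ∈ (cTMinusOne T c).range := by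
  constructor
  · rintro ⟨y, rfl⟩
    exact ⟨conjC y, cTMinusOne_conjC T c y⟩
  · rintro ⟨y, hy⟩
    refine ⟨conjC y, ?_⟩
    rw [ContinuousLinearMap.coe_coe, cTMinusOne_conjC, Complex.conj_conj]
    exact (congrArg conjC hy).trans (conjC_conjC x)

theorem mem_ker_cTMinusOne_conj {c : ℂ} {x : E × E} :
    x ∈ (cTMinusOne T (starRingEnd ℂ c)).ker ↔ conjC x ∈ (cTMinusOne T c).ker := by
  rw [LinearMap.mem_ker, LinearMap.mem_ker, ContinuousLinearMap.coe_coe,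
    ContinuousLinearMap.coe_coe, cTMinusOne_conjC]
  simp [conjC, Prod.ext_iff]

theorem isCompl_range_ker_conj {c : ℂ}
    (h : IsCompl (cTMinusOne T c).range (cTMinusOne T c).ker) :
    IsCompl (cTMinusOne T (starRingEnd ℂ c)).range (cTMinusOne T (starRingEnd ℂ c)).ker := by
  let Φ := (Submodule.orderIsoMapComap (conjL (E := E)).toLinearEquiv).symm
  have hrange : (cTMinusOne T (starRingEnd ℂ c)).range = Φ (cTMinusOne T c).range := by
    ext x
    exact mem_range_cTMinusOne_conj T
  have hker : (cTMinusOne T (starRingEnd ℂ c)).ker = Φ (cTMinusOne T c).ker := by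
    ext x
    exact mem_ker_cTMinusOne_conj T
  rw [hrange, hker]
  exact Φ.isCompl h

theorem isClosed_sharp_I [CompleteSpace E]
    (h : IsCompl (cTMinusOne T Complex.I).range (cTMinusOne T Complex.I).ker)
    [FiniteDimensional ℝ (cTMinusOne T Complex.I).ker] :
    IsClosed (sharp T Complex.I : Set (E × E)) := by
  have hI := isClosed_range_of_isCompl_of_finiteDimensional_ker _
    (cTMinusOne T Complex.I).isClosed_ker h
  have hnegI : ((cTMinusOne T (-Complex.I)).range : Set (E × E)) =
      conjL ⁻¹' (cTMinusOne T Complex.I).range := by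
    ext x
    rw [← Complex.conj_I]
    exact mem_range_cTMinusOne_conj T
  rw [sharp, Submodule.coe_inf, hnegI]
  exact hI.inter (hI.preimage conjL.continuous)

theorem bijOn_sharp_I_mul_int
    (hI : IsCompl (cTMinusOne T Complex.I).range (cTMinusOne T Complex.I).ker)
    (hbij : ∀ k : ℤ, k ≠ 1 → k ≠ -1 → Function.Bijective (cTMinusOne T (Complex.I * k)))
    (n : ℤ) : Set.BijOn (cTMinusOne T (Complex.I * n)) (sharp T Complex.I) (sharp T Complex.I) := by
  have hnegI : IsCompl (cTMinusOne T (-Complex.I)).range (cTMinusOne T (-Complex.I)).ker := by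
    simpa using isCompl_range_ker_conj T hI
  by_cases h1 : n = 1
  · subst h1
    simpa using bijOn_sharp_of_isCompl T hI hnegI
  by_cases h2 : n = -1
  · subst h2
    rw [← sharp_neg]
    simpa using bijOn_sharp_of_isCompl T hnegI (by rwa [neg_neg])
  exact bijOn_sharp_of_bijective T (hbij n h1 h2)

end Sharp

section SimpleEigenvalue

variable {E : Type*} [NormedAddCommGroup E] [NormedSpace ℝ E] (T : E →L[ℝ] E)

theorem finiteDimensional_ker_cTMinusOne {c : ℂ} {χ : E × E}
    (hker : ∀ x ∈ (cTMinusOne T c).ker, ∃ d : ℂ, x = csmul d χ) :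
    FiniteDimensional ℝ (cTMinusOne T c).ker := by
  have := FiniteDimensional.span_of_finite ℝ (Set.toFinite {χ, csmul Complex.I χ})
  refine Submodule.finiteDimensional_of_le (S₂ := Submodule.span ℝ {χ, csmul Complex.I χ})
    fun x hx => ?_
  obtain ⟨d, rfl⟩ := hker x hx
  exact Submodule.mem_span_pair.2 ⟨d.re, d.im, (csmul_eq_smul_add_smul d χ).symm⟩

theorem isCompl_range_ker_cTMinusOne {c : ℂ} {χ : E × E} (hχ : χ ∈ (cTMinusOne T c).ker)
    (hker : ∀ x ∈ (cTMinusOne T c).ker, ∃ d : ℂ, x = csmul d χ)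
    (hχr : χ ∉ (cTMinusOne T c).range)
    (hcodim : ∃ χ' : E × E, ∀ v, ∃ d : ℂ, ∃ r ∈ (cTMinusOne T c).range, v = r + csmul d χ') :
    IsCompl (cTMinusOne T c).range (cTMinusOne T c).ker := by
  have hmul : ∀ d : ℂ, csmul d χ ∈ (cTMinusOne T c).range → d = 0 := fun d hd => by
    by_contra hd0
    apply hχr
    simpa [csmul_csmul, inv_mul_cancel₀ hd0] using csmul_mem_range_cTMinusOne T d⁻¹ hd
  refine ⟨Submodule.disjoint_def.2 fun x hxr hxk => ?_, ?_⟩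
  · obtain ⟨d, rfl⟩ := hker x hxk
    rw [hmul d hxr, zero_csmul]
  obtain ⟨χ', hχ'⟩ := hcodim
  obtain ⟨d₁, r₁, hr₁, hχeq⟩ := hχ' χ
  have hd₁ : d₁ ≠ 0 := by
    rintro rfl
    exact hχr (by simpa [hχeq] using hr₁)
  refine Submodule.codisjoint_iff_exists_add_eq.2 fun v => ?_
  obtain ⟨d, r, hr, rfl⟩ := hχ' v
  -- `χ' = d₁⁻¹ (χ - r₁)` lies in `range ⊔ ker`
  refine ⟨r - csmul (d / d₁) r₁, csmul (d / d₁) χ,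
    sub_mem hr (csmul_mem_range_cTMinusOne T _ hr₁), csmul_mem_ker_cTMinusOne T _ hχ, ?_⟩
  rw [hχeq, csmul_add, csmul_csmul, div_mul_cancel₀ d hd₁]
  abel

end SimpleEigenvalue

section Operator

variable (ι : U →L[ℝ] V) (e : U ≃L[ℝ] V)

theorem iotaC_eq (ψ : U × U) :
    iotaC ι ψ = (ι ∘L e.symm).prodMap (ι ∘L e.symm) (e.prodCongr e ψ) := by
  simp [iotaC]

theorem cMinusA_apply_eq (c : ℂ) (ψ : U × U) :
    cMinusA ι e c ψ = cTMinusOne (ι ∘L e.symm) c (e.prodCongr e ψ) := by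
  simp [cMinusA, cTMinusOne_apply, iotaC, AcC]

theorem cMinusA_eq_comp (c : ℂ) :
    cMinusA ι e c = cTMinusOne (ι ∘L e.symm) c ∘ e.prodCongr e :=
  funext (cMinusA_apply_eq ι e c)

theorem range_cMinusA (c : ℂ) :
    Set.range (cMinusA ι e c) = (cTMinusOne (ι ∘L e.symm) c).range := by
  rw [cMinusA_eq_comp, EquivLike.range_comp, LinearMap.coe_range, ContinuousLinearMap.coe_coe]

theorem Vsharp_eq : Vsharp ι e = sharp (ι ∘L e.symm) Complex.I := by
  rw [Vsharp, range_cMinusA, range_cMinusA, sharp, Submodule.coe_inf]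

theorem iotaC_mem_Vsharp_iff (ψ : U × U) :
    iotaC ι ψ ∈ Vsharp ι e ↔ e.prodCongr e ψ ∈ sharp (ι ∘L e.symm) Complex.I := by
  rw [Vsharp_eq, iotaC_eq ι e, SetLike.mem_coe, prodMap_mem_sharp_iff]

theorem prodCongr_csmul (c : ℂ) (ψ : U × U) :
    e.prodCongr e (csmul c ψ) = csmul c (e.prodCongr e ψ) := by
  simp [csmul]

theorem H2hyp.isCompl_range_ker (h : H2hyp ι e) :
    IsCompl (cTMinusOne (ι ∘L e.symm) Complex.I).range (cTMinusOne (ι ∘L e.symm) Complex.I).ker ∧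
      FiniteDimensional ℝ (cTMinusOne (ι ∘L e.symm) Complex.I).ker := by
  obtain ⟨⟨ψ, hψ, hψ0, hspan⟩, ⟨χ', -, hcodim⟩, hnr⟩ := h
  set T : V →L[ℝ] V := ι ∘L e.symm
  have hran : ranIA ι e = (cTMinusOne T Complex.I).range := range_cMinusA ι e _
  have hker : ∀ x ∈ (cTMinusOne T Complex.I).ker, ∃ d : ℂ, x = csmul d (e.prodCongr e ψ) := by
    intro x hx
    obtain ⟨d, hd⟩ := hspan ((e.prodCongr e).symm x)
      (by show cMinusA ι e Complex.I _ = 0; rwa [cMinusA_apply_eq, ContinuousLinearEquiv.apply_symm_apply])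
    exact ⟨d, by rw [← (e.prodCongr e).apply_symm_apply x, hd, prodCongr_csmul]⟩
  have hχ : e.prodCongr e ψ ∈ (cTMinusOne T Complex.I).ker := by
    show cTMinusOne T Complex.I (e.prodCongr e ψ) = 0
    rwa [← cMinusA_apply_eq]
  have hχr : e.prodCongr e ψ ∉ (cTMinusOne T Complex.I).range := fun hr => hnr ψ hψ hψ0 (by
    rw [hran, iotaC_eq ι e, SetLike.mem_coe]
    exact (prodMap_mem_range_cTMinusOne_iff T).2 hr)
  refine ⟨isCompl_range_ker_cTMinusOne T hχ hker hχr ⟨χ', fun v => ?_⟩,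
    finiteDimensional_ker_cTMinusOne T hker⟩
  simpa only [hran, SetLike.mem_coe] using hcodim v

theorem bijective_cTMinusOne_iff (c : ℂ) :
    Function.Bijective (cTMinusOne (ι ∘L e.symm) c) ↔ Function.Bijective (cMinusA ι e c) := by
  rw [cMinusA_eq_comp, EquivLike.bijective_comp]

end Operator

theorem iZ_subset_resolvent_Asharp_general
    {V : Type*} [NormedAddCommGroup V] [NormedSpace ℝ V] [CompleteSpace V]
    {U : Type*} [NormedAddCommGroup U] [NormedSpace ℝ U] [CompleteSpace U]
    (ι A : U →L[ℝ] V) (hAbij : Function.Bijective A)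
    (hH2 : H2hyp ι A) (hH4 : H4hyp ι A) :
    ∀ n : ℤ,
      -- `in - A♯` maps `V♯ ∩ 𝒟(A_c)` into `V♯`:
      (∀ ψ : U × U, iotaC ι ψ ∈ Vsharp ι A →
        cMinusA ι A (Complex.I * (n : ℂ)) ψ ∈ Vsharp ι A) ∧
      -- it is injective on `V♯ ∩ 𝒟(A_c)`:
      Set.InjOn (cMinusA ι A (Complex.I * (n : ℂ)))
        {ψ : U × U | iotaC ι ψ ∈ Vsharp ι A} ∧
      -- it is onto `V♯`:
      (∀ v ∈ Vsharp ι A, ∃ ψ : U × U,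
        iotaC ι ψ ∈ Vsharp ι A ∧ cMinusA ι A (Complex.I * (n : ℂ)) ψ = v) ∧
      -- and its inverse is bounded:
      ∃ C : ℝ, ∀ ψ : U × U, iotaC ι ψ ∈ Vsharp ι A →
        ‖iotaC ι ψ‖ ≤ C * ‖cMinusA ι A (Complex.I * (n : ℂ)) ψ‖ := by
  intro n
  obtain ⟨e, rfl⟩ : ∃ e : U ≃L[ℝ] V, (e : U →L[ℝ] V) = A :=
    ⟨.ofBijective A (LinearMap.ker_eq_bot.2 hAbij.1) (LinearMap.range_eq_top.2 hAbij.2),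
      ContinuousLinearEquiv.coe_ofBijective _ _ _⟩
  set T : V →L[ℝ] V := ι ∘L e.symm
  obtain ⟨hI, hfin⟩ := hH2.isCompl_range_ker
  have hbij := bijOn_sharp_I_mul_int T hI
    (fun k h1 h2 => (bijective_cTMinusOne_iff ι e _).2 (hH4 k h1 h2)) n
  have hclosed := isClosed_sharp_I T hI
  obtain ⟨C, hC⟩ := exists_norm_le_mul_norm_of_injOn _ hclosed hbij.injOn
    (by rwa [hbij.image_eq])
  have hB := cMinusA_apply_eq ι e (Complex.I * n)
  have hdom (ψ : U × U) := iotaC_mem_Vsharp_iff ι e ψ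
  refine ⟨fun ψ hψ => ?_, fun ψ hψ φ hφ h => ?_, fun v hv => ?_, ‖T.prodMap T‖ * C, fun ψ hψ => ?_⟩
  · rw [Vsharp_eq, hB]
    exact hbij.mapsTo ((hdom ψ).1 hψ)
  · rw [hB, hB] at h
    exact (e.prodCongr e).injective (hbij.injOn ((hdom ψ).1 hψ) ((hdom φ).1 hφ) h)
  · rw [Vsharp_eq] at hv
    obtain ⟨x, hx, rfl⟩ := hbij.surjOn hv
    refine ⟨(e.prodCongr e).symm x, ?_, ?_⟩
    · rwa [hdom, ContinuousLinearEquiv.apply_symm_apply]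
    · rw [hB, ContinuousLinearEquiv.apply_symm_apply]
  · calc ‖iotaC ι ψ‖ = ‖T.prodMap T (e.prodCongr e ψ)‖ := by rw [iotaC_eq ι e]
      _ ≤ ‖T.prodMap T‖ * ‖e.prodCongr e ψ‖ := (T.prodMap T).le_opNorm _
      _ ≤ ‖T.prodMap T‖ * (C * ‖cTMinusOne T (Complex.I * n) (e.prodCongr e ψ)‖) := by
          gcongr
          exact hC _ ((hdom ψ).1 hψ)
      _ = ‖T.prodMap T‖ * C * ‖cMinusA ι e (Complex.I * n) ψ‖ := by rw [hB, mul_assoc]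

/-- **Proposition 3.4 (iii).** Assume (H2) and (H4).  Then `iℤ ⊆ ρ(A♯)`: for every `n ∈ ℤ`
the operator `in - A♯` is a bijection from `V♯ ∩ 𝒟(A_c)` onto `V♯`, with bounded inverse.
(Here `A♯ = A_c|_{V♯}` and `V♯ = ℛ(i - A_c) ∩ ℛ(-i - A_c)`.) -/
theorem iZ_subset_resolvent_Asharp
    {V : Type*} [NormedAddCommGroup V] [NormedSpace ℝ V] [CompleteSpace V]
    {U : Type*} [NormedAddCommGroup U] [NormedSpace ℝ U] [CompleteSpace U]
    (ι A : U →L[ℝ] V) (hι : Function.Injective ι)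
    (hUnorm : ∀ u : U, ‖u‖ = ‖A u‖) (hAbij : Function.Bijective A)
    (hH2 : H2hyp ι A) (hH4 : H4hyp ι A) :
    ∀ n : ℤ,
      -- `in - A♯` maps `V♯ ∩ 𝒟(A_c)` into `V♯`:
      (∀ ψ : U × U, iotaC ι ψ ∈ Vsharp ι A →
        cMinusA ι A (Complex.I * (n : ℂ)) ψ ∈ Vsharp ι A) ∧
      -- it is injective on `V♯ ∩ 𝒟(A_c)`:
      Set.InjOn (cMinusA ι A (Complex.I * (n : ℂ)))
        {ψ : U × U | iotaC ι ψ ∈ Vsharp ι A} ∧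
      -- it is onto `V♯`:
      (∀ v ∈ Vsharp ι A, ∃ ψ : U × U,
        iotaC ι ψ ∈ Vsharp ι A ∧ cMinusA ι A (Complex.I * (n : ℂ)) ψ = v) ∧
      -- and its inverse is bounded:
      ∃ C : ℝ, ∀ ψ : U × U, iotaC ι ψ ∈ Vsharp ι A →
        ‖iotaC ι ψ‖ ≤ C * ‖cMinusA ι A (Complex.I * (n : ℂ)) ψ‖ :=
  iZ_subset_resolvent_Asharp_general ι A hAbij hH2 hH4

end HopfStmt
end
end

section
/- Assume (H2): ±i are simple eigenvalues of A, i.e. dim 𝒩(i−A_c) = 1 = codim ℛ(i−A_c) and every nonzero ψ ∈ 𝒩(i−A_c) satisfies ψ ∉ ℛ(i−A_c). Fix ψ⋆ ∈ 𝒩(i−A_c) ∖ {0} and set u⋆ := L₁ψ⋆. Then ℛ(T₁) ⊕ span_ℝ{u⋆, Au⋆} = Y₁: every element of Y₁ is uniquely the sum of an element of the range of T₁ and a real linear combination of u⋆ and Au⋆, and u⋆, Au⋆ are linearly independent. -/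
/-! Every element of `Y₁` is `L₁φ` for a unique `φ ∈ V_c`, and differentiating `cos`, `sin`
gives `T₁ ∘ L₁ = L₁ ∘ (i - A_c)`, so `ℛ(T₁) = L₁ ℛ(i - A_c)`. Since `A_c ψ⋆ = i ψ⋆`, also
`p u⋆ + q Au⋆ = L₁((p + iq) ψ⋆)`. The claim thus becomes `V_c = ℛ(i - A_c) ⊕ ℂ ψ⋆`, which holds
because `ℛ(i - A_c)` is a complex subspace of codimension one that does not contain `ψ⋆`. -/

open Real Filter Set Function MeasureTheory
open scoped ENNReal

noncomputable section

namespace HopfStmt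

variable {V : Type*} [NormedAddCommGroup V] [NormedSpace ℝ V]
variable {U : Type*} [NormedAddCommGroup U] [NormedSpace ℝ U]

section Complexification

variable {E : Type*} [AddCommGroup E] [Module ℝ E]

lemma csmul_one (x : E × E) : csmul 1 x = x := by simp [csmul]

lemma csmul_mul (c d : ℂ) (x : E × E) : csmul (c * d) x = csmul c (csmul d x) := by
  simp only [csmul, Complex.mul_re, Complex.mul_im, Prod.mk.injEq]
  constructor <;> module

lemma csmul_sub_left (c d : ℂ) (x : E × E) : csmul (c - d) x = csmul c x - csmul d x := by
  simp only [csmul, Complex.sub_re, Complex.sub_im, Prod.mk_sub_mk, Prod.mk.injEq]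
  constructor <;> module

lemma csmul_sub (c : ℂ) (x y : E × E) : csmul c (x - y) = csmul c x - csmul c y := by
  simp only [csmul, Prod.fst_sub, Prod.snd_sub, Prod.mk_sub_mk, Prod.mk.injEq]
  constructor <;> module

-- `E × E` carries no `ℂ`-module instance, so complex subspaces are sets closed under
-- subtraction and `csmul`.

variable {R : Set (E × E)} {x : E × E}

lemma eq_zero_of_csmul_mem (hsmul : ∀ (c : ℂ), ∀ r ∈ R, csmul c r ∈ R) (hx : x ∉ R) {c : ℂ}
    (hc : csmul c x ∈ R) : c = 0 := by
  by_contra hc0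
  apply hx
  simpa only [← csmul_mul, inv_mul_cancel₀ hc0, csmul_one] using hsmul c⁻¹ _ hc

lemma exists_add_csmul_of_notMem (hsub : ∀ r ∈ R, ∀ r' ∈ R, r - r' ∈ R)
    (hsmul : ∀ (c : ℂ), ∀ r ∈ R, csmul c r ∈ R) (hx : x ∉ R)
    (hcodim : ∃ χ : E × E, ∀ v : E × E, ∃ c : ℂ, ∃ r ∈ R, v = r + csmul c χ) (v : E × E) :
    ∃ r ∈ R, ∃ c : ℂ, v = r + csmul c x := by
  obtain ⟨χ, hχ⟩ := hcodim
  obtain ⟨c₀, r₀, hr₀, hx₀⟩ := hχ x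
  obtain ⟨c, r, hr, hv⟩ := hχ v
  have hc₀ : c₀ ≠ 0 := by
    rintro rfl
    exact hx (by simpa [hx₀, csmul, Prod.mk_zero_zero] using hr₀)
  -- `χ = c₀⁻¹ (x - r₀)`, so `c χ` is a multiple of `x` modulo `R`
  have hcχ : csmul c χ = csmul (c * c₀⁻¹) x - csmul (c * c₀⁻¹) r₀ := by
    rw [← csmul_sub, hx₀, add_sub_cancel_left, ← csmul_mul, mul_assoc, inv_mul_cancel₀ hc₀,
      mul_one]
  refine ⟨r - csmul (c * c₀⁻¹) r₀, hsub r hr _ (hsmul _ r₀ hr₀), c * c₀⁻¹, ?_⟩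
  rw [hv, hcχ]
  abel

lemma eq_of_add_csmul_eq (hsub : ∀ r ∈ R, ∀ r' ∈ R, r - r' ∈ R)
    (hsmul : ∀ (c : ℂ), ∀ r ∈ R, csmul c r ∈ R) (hx : x ∉ R) {r r' : E × E} {c c' : ℂ}
    (hr : r ∈ R) (hr' : r' ∈ R) (h : r + csmul c x = r' + csmul c' x) : r = r' ∧ c = c' := by
  have hcc' : c - c' = 0 := by
    refine eq_zero_of_csmul_mem hsmul hx ?_
    have hdiff : csmul c x - csmul c' x = r' - r := by
      rw [sub_eq_sub_iff_add_eq_add, add_comm, h]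
    rw [csmul_sub_left, hdiff]
    exact hsub r' hr' r hr
  rw [sub_eq_zero] at hcc'
  subst hcc'
  exact ⟨add_right_cancel h, rfl⟩

end Complexification

section FirstModes

variable {E : Type*} [AddCommGroup E] [Module ℝ E]

lemma L1_add (φ χ : E × E) : L1 (φ + χ) = L1 φ + L1 χ := by
  funext t
  simp only [L1, Prod.fst_add, Prod.snd_add, Pi.add_apply]
  module

lemma L1_zero : L1 (0 : E × E) = 0 := by
  funext t
  simp [L1]

lemma L1_injective : Function.Injective (L1 : E × E → ℝ → E) := by
  intro φ χ h
  have h0 := congrFun h 0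
  have h1 := congrFun h (π / 2)
  simp only [L1, cos_zero, sin_zero, cos_pi_div_two, sin_pi_div_two, one_smul, zero_smul,
    sub_zero, zero_sub, neg_inj] at h0 h1
  exact Prod.ext h0 h1

lemma memSp1_iff_exists_L1 {w : ℝ → E} : memSp1 w ↔ ∃ φ : E × E, w = L1 φ := by
  constructor
  · rintro ⟨a, b, hw⟩
    refine ⟨(a, -b), funext fun t => ?_⟩
    simp only [hw, L1, smul_neg, sub_neg_eq_add]
  · rintro ⟨φ, rfl⟩
    exact ⟨φ.1, -φ.2, fun t => by simp only [L1, smul_neg, sub_eq_add_neg]⟩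

end FirstModes

lemma T1op_L1 (ι A : U →L[ℝ] V) (φ : U × U) :
    T1op ι A (L1 φ) = L1 (cMinusA ι A Complex.I φ) := by
  funext t
  have hder : HasDerivAt (fun s => ι (L1 φ s)) (-sin t • ι φ.1 - cos t • ι φ.2) t := by
    simp only [L1, map_sub, map_smul]
    exact ((hasDerivAt_cos t).smul_const _).sub ((hasDerivAt_sin t).smul_const _)
  simp only [T1op, Xder]
  rw [hder.deriv]
  simp only [L1, cMinusA, csmul, iotaC, AcC, Complex.I_re, Complex.I_im, map_sub, map_smul, Prod.fst_sub, Prod.snd_sub]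
  module

lemma exists_memSp1_T1op_eq_iff (ι A : U →L[ℝ] V) {z : ℝ → V} :
    (∃ w : ℝ → U, memSp1 w ∧ T1op ι A w = z) ↔ ∃ r ∈ ranIA ι A, z = L1 r := by
  constructor
  · rintro ⟨w, hw, rfl⟩
    obtain ⟨φ, rfl⟩ := memSp1_iff_exists_L1.mp hw
    exact ⟨_, ⟨φ, rfl⟩, T1op_L1 ι A φ⟩
  · rintro ⟨_, ⟨φ, rfl⟩, rfl⟩
    exact ⟨L1 φ, memSp1_iff_exists_L1.mpr ⟨φ, rfl⟩, T1op_L1 ι A φ⟩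

lemma sub_mem_ranIA (ι A : U →L[ℝ] V) :
    ∀ r ∈ ranIA ι A, ∀ r' ∈ ranIA ι A, r - r' ∈ ranIA ι A := by
  rintro _ ⟨φ, rfl⟩ _ ⟨χ, rfl⟩
  refine ⟨φ - χ, ?_⟩
  simp only [cMinusA, csmul, iotaC, AcC, map_sub, Prod.fst_sub, Prod.snd_sub, Prod.mk_sub_mk,
    Prod.mk.injEq]
  constructor <;> module

lemma csmul_mem_ranIA (ι A : U →L[ℝ] V) :
    ∀ (c : ℂ), ∀ r ∈ ranIA ι A, csmul c r ∈ ranIA ι A := by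
  rintro c _ ⟨φ, rfl⟩
  refine ⟨csmul c φ, ?_⟩
  simp only [cMinusA, csmul, iotaC, AcC, map_sub, map_add, map_smul, Prod.mk_sub_mk,
    Prod.mk.injEq]
  constructor <;> module

lemma zero_mem_ranIA (ι A : U →L[ℝ] V) : (0 : V × V) ∈ ranIA ι A :=
  ⟨0, by simp [cMinusA, csmul, iotaC, AcC]⟩

lemma smul_L1_add_smul_A_L1 (ι A : U →L[ℝ] V) {ψ : U × U} (hψ : ψ ∈ kerIA ι A) (p q : ℝ) :
    (fun t => p • ι (L1 ψ t) + q • A (L1 ψ t)) = L1 (csmul ⟨p, q⟩ (iotaC ι ψ)) := by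
  have hψ' := Prod.ext_iff.mp hψ
  simp only [cMinusA, csmul, iotaC, AcC, Complex.I_re, Complex.I_im, zero_smul, one_smul,
    zero_sub, Prod.fst_sub, Prod.snd_sub, Prod.fst_zero, Prod.snd_zero,
    sub_eq_zero] at hψ'
  funext t
  simp only [L1, csmul, iotaC, map_sub, map_smul, ← hψ'.1, ← hψ'.2]
  module

theorem range_T1_direct_sum_span_general
    {V : Type*} [NormedAddCommGroup V] [NormedSpace ℝ V]
    {U : Type*} [NormedAddCommGroup U] [NormedSpace ℝ U]
    (ι A : U →L[ℝ] V)
    (hH2 : H2hyp ι A)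
    (ψs : U × U) (hψs : ψs ∈ kerIA ι A) (hψs0 : ψs ≠ 0) :
    -- `u⋆` and `Au⋆` are linearly independent:
    (∀ p q : ℝ,
      (fun t : ℝ => p • ι (L1 ψs t) + q • A (L1 ψs t)) = (0 : ℝ → V) →
        p = 0 ∧ q = 0) ∧
    -- unique decomposition of every element of `Y₁`:
    ∀ y : ℝ → V, memSp1 y →
      ∃! z : (ℝ → V) × ℝ × ℝ,
        (∃ w : ℝ → U, memSp1 w ∧ T1op ι A w = z.1) ∧
        y = fun t => z.1 t + z.2.1 • ι (L1 ψs t) + z.2.2 • A (L1 ψs t) := by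
  have hsub := sub_mem_ranIA ι A
  have hsmul := csmul_mem_ranIA ι A
  have hx : iotaC ι ψs ∉ ranIA ι A := hH2.2.2 ψs hψs hψs0
  have hcodim := hH2.2.1.imp fun _ hχ => hχ.2
  have hsum : ∀ (r : V × V) (p q : ℝ),
      (fun t => L1 r t + p • ι (L1 ψs t) + q • A (L1 ψs t))
        = L1 (r + csmul ⟨p, q⟩ (iotaC ι ψs)) := fun r p q => by
    simp only [add_assoc, L1_add, ← smul_L1_add_smul_A_L1 ι A hψs]
    rfl
  refine ⟨fun p q hpq => ?_, fun y hy => ?_⟩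
  · rw [smul_L1_add_smul_A_L1 ι A hψs, ← L1_zero] at hpq
    have hc := eq_zero_of_csmul_mem hsmul hx (L1_injective hpq ▸ zero_mem_ranIA ι A)
    exact ⟨congrArg Complex.re hc, congrArg Complex.im hc⟩
  obtain ⟨v, rfl⟩ := memSp1_iff_exists_L1.mp hy
  obtain ⟨r, hr, c, rfl⟩ := exists_add_csmul_of_notMem hsub hsmul hx hcodim v
  refine ⟨(L1 r, c.re, c.im), ⟨(exists_memSp1_T1op_eq_iff ι A).mpr ⟨r, hr, rfl⟩, ?_⟩, ?_⟩
  · rw [hsum]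
  · rintro ⟨z, p, q⟩ ⟨hz, hyz⟩
    obtain ⟨r', hr', rfl⟩ := (exists_memSp1_T1op_eq_iff ι A).mp hz
    obtain ⟨rfl, rfl⟩ := eq_of_add_csmul_eq hsub hsmul hx hr hr'
      (L1_injective (hyz.trans (hsum r' p q)))
    rfl

/-- **(4.10).** Assume (H2), fix `ψ⋆ ∈ 𝒩(i - A_c) \ {0}` and set `u⋆ := L₁ψ⋆`.  Then
`ℛ(T₁) ⊕ span_ℝ{u⋆, Au⋆} = Y₁`: the functions `u⋆, Au⋆` (viewed in `Y₁` via `ι`) are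
linearly independent and every element of `Y₁` is uniquely the sum of an element of
`ℛ(T₁)` and a real linear combination of `u⋆` and `Au⋆`. -/
theorem range_T1_direct_sum_span
    {V : Type*} [NormedAddCommGroup V] [NormedSpace ℝ V] [CompleteSpace V]
    {U : Type*} [NormedAddCommGroup U] [NormedSpace ℝ U] [CompleteSpace U]
    (ι A : U →L[ℝ] V) (hι : Function.Injective ι)
    (hUnorm : ∀ u : U, ‖u‖ = ‖A u‖) (hAbij : Function.Bijective A)
    (hH2 : H2hyp ι A)
    (ψs : U × U) (hψs : ψs ∈ kerIA ι A) (hψs0 : ψs ≠ 0) :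
    -- `u⋆` and `Au⋆` are linearly independent:
    (∀ p q : ℝ,
      (fun t : ℝ => p • ι (L1 ψs t) + q • A (L1 ψs t)) = (0 : ℝ → V) →
        p = 0 ∧ q = 0) ∧
    -- unique decomposition of every element of `Y₁`:
    ∀ y : ℝ → V, memSp1 y →
      ∃! z : (ℝ → V) × ℝ × ℝ,
        (∃ w : ℝ → U, memSp1 w ∧ T1op ι A w = z.1) ∧
        y = fun t => z.1 t + z.2.1 • ι (L1 ψs t) + z.2.2 • A (L1 ψs t) :=
  range_T1_direct_sum_span_general ι A hH2 ψs hψs hψs0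

end HopfStmt
end
end
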